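/- arXiv:math/0701541 — 3 statements merged into one kernel-verified Lean document; each statement's English description precedes it below -/
import Mathlib

section
/- Let s ∈ (0,1), let I : E_A^∞ → ℝ be Hölder continuous with I(ω) ≥ −log s for all ω, and let J : E_A^∞ → ℝ^d be bounded and Hölder continuous. If E_A^∞ is nonempty and finitely irreducible, then every α ∈ K is a limit of ratios coming from periodic points: K ⊆ closure{ S_pJ(x)/S_pI(x) : p ≥ 1, x ∈ E_A^∞ with σ^p(x) = x }, where K := {α ∈ ℝ^d : there exists ω ∈ E_A^∞ with lim_{n→∞} S_nJ(ω)/S_nI(ω) = α}. -/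
/-! Close up the first `N` letters of `ω` into a periodic orbit of period `N + |w|`, using a
connecting word `w` from the finite set witnessing finite irreducibility. By bounded distortion
(the Hölder variations decay geometrically along a common prefix) and because only boundedly many
letters are appended, the Birkhoff sums of `I` and `J` along this orbit differ from `S_N I(ω)`,
`S_N J(ω)` by constants independent of `N`. Since `S_N I ≥ -N log s` grows linearly, the periodic
ratio lies within `O(1/N)` of the `N`-th ratio of `ω`, which tends to `α`. -/

open MeasureTheory Filter Topology
open scoped ENNReal

/-- The one-sided subshift `E_A^∞` over the alphabet `E` with incidence matrix `A`. -/
abbrev Subshift (E : Type*) (A : E → E → Bool) : Type _ :=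
  {ω : ℕ → E // ∀ i : ℕ, A (ω i) (ω (i + 1)) = true}

/-- The left shift map `σ` on `E_A^∞`. -/
def shiftMap {E : Type*} {A : E → E → Bool} (ω : Subshift E A) : Subshift E A :=
  ⟨fun i => ω.1 (i + 1), fun i => ω.2 (i + 1)⟩

/-- The `n`-th Birkhoff sum `S_n f = ∑_{k=0}^{n-1} f ∘ σ^k`. -/
noncomputable def birkSum {E : Type*} {A : E → E → Bool} {X : Type*} [AddCommMonoid X]
    (f : Subshift E A → X) (n : ℕ) (ω : Subshift E A) : X :=
  ∑ k ∈ Finset.range n, f (shiftMap^[k] ω)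

/-- `f` is Hölder continuous with exponent `a > 0`:
`sup_{n ≥ 1} sup { ‖f ω - f τ‖ e^{a(n-1)} : ω, τ agree in their first n coordinates } < ∞`. -/
def IsHolder {E : Type*} {A : E → E → Bool} {X : Type*} [SeminormedAddGroup X]
    (f : Subshift E A → X) (a : ℝ) : Prop :=
  ∃ v : ℝ, ∀ n : ℕ, 1 ≤ n → ∀ ω τ : Subshift E A,
    (∀ i < n, ω.1 i = τ.1 i) → ‖f ω - f τ‖ * Real.exp (a * ((n : ℝ) - 1)) ≤ v

/-- `E_A^∞` is finitely irreducible: there is a finite set `W` of admissible words such that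
any two letters can be joined by a word from `W`. -/
def FinitelyIrreducible {E : Type*} (A : E → E → Bool) : Prop :=
  ∃ W : Finset (List E), ∀ a b : E,
    ∃ w ∈ W, List.Chain' (fun x y => A x y = true) (a :: (w ++ [b]))

section

variable {E : Type*} {A : E → E → Bool}

lemma shiftMap_iterate_apply (ω : Subshift E A) (k i : ℕ) :
    (shiftMap^[k] ω).1 i = ω.1 (i + k) := by
  induction k generalizing ω i with
  | zero => rfl
  | succ k ih => rw [Function.iterate_succ_apply, ih]; rfl

lemma exists_periodic_of_cycle {p : ℕ} (hp : 0 < p) (z : ℕ → E)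
    (hz : ∀ i < p, A (z i) (z (i + 1)) = true) (hzp : z p = z 0) :
    ∃ y : Subshift E A, shiftMap^[p] y = y ∧ ∀ i < p, y.1 i = z i := by
  have hwrap : ∀ i, z ((i + 1) % p) = z (i % p + 1) := by
    intro i
    rw [← Nat.mod_add_mod]
    rcases Nat.lt_or_eq_of_le (Nat.mod_lt i hp) with h | h
    · rw [Nat.mod_eq_of_lt h]
    · rw [show i % p + 1 = p from h, Nat.mod_self, hzp]
  refine ⟨⟨fun i => z (i % p), fun i => ?_⟩, ?_, fun i hi => ?_⟩
  · simpa only [hwrap] using hz _ (Nat.mod_lt i hp)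
  · ext i
    simp only [shiftMap_iterate_apply, Nat.add_mod_right]
  · simp only [Nat.mod_eq_of_lt hi]

lemma exists_periodic_of_isChain {L : List E} (hL : L.IsChain (fun x y => A x y = true))
    (hlen : 2 ≤ L.length) (hcyc : L.head? = L.getLast?) :
    ∃ y : Subshift E A, shiftMap^[L.length - 1] y = y ∧
      ∀ i (hi : i < L.length - 1), y.1 i = L[i] := by
  set z : ℕ → E := fun i => L.getD i (L[0]'(by omega))
  obtain ⟨y, hy, hyz⟩ := exists_periodic_of_cycle (A := A) (p := L.length - 1) (by omega) z
    (fun i hi => by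
      simp only [z, List.getD_eq_getElem _ _ (by omega : i < L.length),
        List.getD_eq_getElem _ _ (by omega : i + 1 < L.length)]
      exact List.isChain_iff_getElem.mp hL i (by omega))
    (by
      rw [List.head?_eq_getElem?, List.getLast?_eq_getElem?] at hcyc
      simp only [z, List.getD_eq_getElem?_getD, hcyc])
  exact ⟨y, hy, fun i hi => (hyz i hi).trans (List.getD_eq_getElem _ _ _)⟩

lemma exists_periodic_agreeing_then_word {W : Finset (List E)}
    (hW : ∀ a b : E, ∃ w ∈ W, (a :: (w ++ [b])).IsChain (fun x y => A x y = true))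
    (ω : Subshift E A) {N : ℕ} (hN : 0 < N) :
    ∃ w ∈ W, ∃ y : Subshift E A, shiftMap^[N + w.length] y = y ∧
      (∀ i < N, y.1 i = ω.1 i) ∧ ∀ k (hk : k < w.length), y.1 (N + k) = w[k] := by
  obtain ⟨w, hw, hchain⟩ := hW (ω.1 (N - 1)) (ω.1 0)
  set P := List.ofFn (fun i : Fin N => ω.1 i)
  have hL : (P ++ (w ++ [ω.1 0])).IsChain (fun x y => A x y = true) := by
    refine List.isChain_append.mpr ⟨List.isChain_ofFn.mpr fun i _ => ω.2 i, hchain.tail, ?_⟩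
    intro x hx y hy
    have : x = ω.1 (N - 1) := by simpa [P, List.getLast?_eq_getElem?, hN] using hx.symm
    exact this ▸ List.isChain_cons.mp hchain |>.1 y hy
  have hlen : (P ++ (w ++ [ω.1 0])).length = N + w.length + 1 := by simp [P, add_assoc]
  obtain ⟨y, hy, hyL⟩ := exists_periodic_of_isChain hL (by omega) (by
    simp [P, List.head?_eq_getElem?, List.getLast?_eq_getElem?, List.getElem_append_left, hN])
  rw [hlen, Nat.add_sub_cancel] at hy
  refine ⟨w, hw, y, hy, fun i hi => ?_, fun k hk => ?_⟩
  · simp [hyL i (by omega), P, List.getElem_append_left, hi]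
  · simp [hyL (N + k) (by omega), P, List.getElem_append_right, List.getElem_append_left hk]

variable {X : Type*}

lemma birkSum_add [AddCommMonoid X] (f : Subshift E A → X) (n m : ℕ) (ω : Subshift E A) :
    birkSum f (n + m) ω = birkSum f n ω + birkSum f m (shiftMap^[n] ω) := by
  simp only [birkSum, Finset.sum_range_add, ← Function.iterate_add_apply, add_comm _ n]

lemma mul_le_birkSum {f : Subshift E A → ℝ} {c : ℝ} (hf : ∀ ω, c ≤ f ω) (n : ℕ)
    (ω : Subshift E A) : n * c ≤ birkSum f n ω := by
  simpa [birkSum] using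
    Finset.card_nsmul_le_sum (Finset.range n) _ c fun k _ => hf (shiftMap^[k] ω)

lemma norm_birkSum_le [SeminormedAddCommGroup X] {f : Subshift E A → X} {C : ℝ}
    (hf : ∀ ω, ‖f ω‖ ≤ C) (n : ℕ) (ω : Subshift E A) : ‖birkSum f n ω‖ ≤ n * C := by
  simpa [birkSum] using norm_sum_le_of_le (Finset.range n) fun k _ => hf (shiftMap^[k] ω)

lemma IsHolder.exists_norm_birkSum_sub_le [SeminormedAddCommGroup X] {f : Subshift E A → X}
    {a : ℝ} (hf : IsHolder f a) (ha : 0 < a) :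
    ∃ H : ℝ, ∀ n (ω τ : Subshift E A), (∀ i < n, ω.1 i = τ.1 i) →
      ‖birkSum f n ω - birkSum f n τ‖ ≤ H := by
  obtain ⟨v, hv⟩ := hf
  set r := Real.exp (-a)
  have hr : r < 1 := Real.exp_lt_one_iff.mpr (neg_lt_zero.mpr ha)
  refine ⟨v / (1 - r), fun n ω τ hωτ => ?_⟩
  have hv0 : 0 ≤ v := by simpa using hv 1 le_rfl ω ω fun _ _ => rfl
  have hterm : ∀ k ∈ Finset.range n,
      ‖f (shiftMap^[k] ω) - f (shiftMap^[k] τ)‖ ≤ v * r ^ (n - 1 - k) := by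
    intro k hk
    obtain ⟨j, rfl⟩ := Nat.exists_eq_add_of_lt (Finset.mem_range.mp hk)
    have h := hv (j + 1) (by omega) (shiftMap^[k] ω) (shiftMap^[k] τ) fun i hi => by
      rw [shiftMap_iterate_apply, shiftMap_iterate_apply]; exact hωτ _ (by omega)
    have hexp : Real.exp (a * (((j + 1 : ℕ) : ℝ) - 1)) * r ^ j = 1 := by
      rw [← Real.exp_nat_mul, ← Real.exp_add]
      convert Real.exp_zero using 2
      push_cast; ring
    rw [show k + j + 1 - 1 - k = j by omega]
    calc _ = ‖f (shiftMap^[k] ω) - f (shiftMap^[k] τ)‖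
          * Real.exp (a * (((j + 1 : ℕ) : ℝ) - 1)) * r ^ j := by rw [mul_assoc, hexp, mul_one]
      _ ≤ v * r ^ j := by gcongr
  calc ‖birkSum f n ω - birkSum f n τ‖
      = ‖∑ k ∈ Finset.range n, (f (shiftMap^[k] ω) - f (shiftMap^[k] τ))‖ := by
        rw [birkSum, birkSum, Finset.sum_sub_distrib]
    _ ≤ ∑ k ∈ Finset.range n, v * r ^ (n - 1 - k) := norm_sum_le_of_le _ hterm
    _ = v * ∑ k ∈ Finset.Ico 0 n, r ^ k := by
        rw [← Finset.mul_sum, Finset.sum_range_reflect (r ^ ·) n, Finset.range_eq_Ico]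
    _ ≤ v * (r ^ 0 / (1 - r)) := by
        gcongr; exact geom_sum_Ico_le_of_lt_one (Real.exp_nonneg _) hr
    _ = v / (1 - r) := by ring

lemma IsHolder.exists_norm_birkSum_le_of_word [SeminormedAddCommGroup X]
    {f : Subshift E A → X} {a : ℝ} (hf : IsHolder f a) (ha : 0 < a) (W : Finset (List E)) :
    ∃ B : ℝ, ∀ w ∈ W, ∀ τ : Subshift E A, (∀ k (hk : k < w.length), τ.1 k = w[k]) →
      ‖birkSum f w.length τ‖ ≤ B := by
  obtain ⟨H, hH⟩ := hf.exists_norm_birkSum_sub_le ha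
  have hword : ∀ w : List E, ∃ B : ℝ, ∀ τ : Subshift E A,
      (∀ k (hk : k < w.length), τ.1 k = w[k]) → ‖birkSum f w.length τ‖ ≤ B := by
    intro w
    by_cases h : ∃ τ₀ : Subshift E A, ∀ k (hk : k < w.length), τ₀.1 k = w[k]
    · obtain ⟨τ₀, hτ₀⟩ := h
      refine ⟨‖birkSum f w.length τ₀‖ + H, fun τ hτ => ?_⟩
      refine (norm_le_norm_add_norm_sub' _ (birkSum f w.length τ₀)).trans ?_
      gcongr
      exact hH _ _ _ fun k hk => (hτ k hk).trans (hτ₀ k hk).symm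
    · exact ⟨0, fun τ hτ => absurd ⟨τ, hτ⟩ h⟩
  choose B hB using hword
  obtain ⟨M, hM⟩ := Finset.exists_le (W.image B)
  exact ⟨M, fun w hw τ hτ => (hB w τ hτ).trans (hM _ (Finset.mem_image_of_mem B hw))⟩

lemma IsHolder.exists_norm_birkSum_sub_le_of_agree_of_word [SeminormedAddCommGroup X]
    {f : Subshift E A → X} {a : ℝ} (hf : IsHolder f a) (ha : 0 < a) (W : Finset (List E)) :
    ∃ K : ℝ, ∀ w ∈ W, ∀ (ω y : Subshift E A) (N : ℕ), (∀ i < N, y.1 i = ω.1 i) →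
      (∀ k (hk : k < w.length), y.1 (N + k) = w[k]) →
      ‖birkSum f (N + w.length) y - birkSum f N ω‖ ≤ K := by
  obtain ⟨H, hH⟩ := hf.exists_norm_birkSum_sub_le ha
  obtain ⟨B, hB⟩ := hf.exists_norm_birkSum_le_of_word ha W
  refine ⟨H + B, fun w hw ω y N hyω hyw => ?_⟩
  rw [birkSum_add, add_sub_right_comm]
  refine norm_add_le_of_le (hH N y ω hyω) (hB w hw _ fun k hk => ?_)
  rw [shiftMap_iterate_apply, add_comm]
  exact hyw k hk

lemma norm_inv_smul_sub_inv_smul_le [SeminormedAddCommGroup X] [NormedSpace ℝ X]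
    {a b t : ℝ} (u v : X) (ht : 0 < t) (ha : t ≤ a) (hb : t ≤ b) :
    ‖b⁻¹ • v - a⁻¹ • u‖ ≤ ‖v - u‖ / t + |b - a| * ‖u‖ / t ^ 2 := by
  have ha0 : 0 < a := ht.trans_le ha
  have hb0 : 0 < b := ht.trans_le hb
  have hinv : |b⁻¹ - a⁻¹| ≤ |b - a| / t ^ 2 := by
    rw [inv_sub_inv hb0.ne' ha0.ne', abs_div, abs_sub_comm, abs_of_pos (mul_pos hb0 ha0), sq]
    gcongr
  calc ‖b⁻¹ • v - a⁻¹ • u‖ = ‖b⁻¹ • (v - u) + (b⁻¹ - a⁻¹) • u‖ := by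
        rw [smul_sub, sub_smul]; abel_nf
    _ ≤ b⁻¹ * ‖v - u‖ + |b⁻¹ - a⁻¹| * ‖u‖ := by
        refine (norm_add_le _ _).trans_eq ?_
        rw [norm_smul, norm_smul, Real.norm_of_nonneg (inv_nonneg.mpr hb0.le), Real.norm_eq_abs]
    _ ≤ t⁻¹ * ‖v - u‖ + |b - a| / t ^ 2 * ‖u‖ := by gcongr
    _ = ‖v - u‖ / t + |b - a| * ‖u‖ / t ^ 2 := by ring

lemma exists_periodic_birkSum_ratio_near [NormedAddCommGroup X] [NormedSpace ℝ X]
    {I : Subshift E A → ℝ} {J : Subshift E A → X} {c aI aJ : ℝ}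
    (hfi : FinitelyIrreducible A) (hc : 0 < c) (hI : ∀ ω, c ≤ I ω)
    (haI : 0 < aI) (hIhold : IsHolder I aI) (haJ : 0 < aJ) (hJhold : IsHolder J aJ)
    (hJbdd : ∃ C : ℝ, ∀ ω, ‖J ω‖ ≤ C) :
    ∃ D : ℝ, ∀ (ω : Subshift E A) (N : ℕ), 0 < N → ∃ p, 1 ≤ p ∧ ∃ y : Subshift E A,
      shiftMap^[p] y = y ∧
        dist ((birkSum I p y)⁻¹ • birkSum J p y) ((birkSum I N ω)⁻¹ • birkSum J N ω) ≤ D / N := by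
  obtain ⟨W, hW⟩ := hfi
  obtain ⟨KI, hKI⟩ := hIhold.exists_norm_birkSum_sub_le_of_agree_of_word haI W
  obtain ⟨KJ, hKJ⟩ := hJhold.exists_norm_birkSum_sub_le_of_agree_of_word haJ W
  obtain ⟨C, hC⟩ := hJbdd
  refine ⟨KJ / c + KI * C / c ^ 2, fun ω N hN => ?_⟩
  obtain ⟨w, hw, y, hy, hyω, hyw⟩ := exists_periodic_agreeing_then_word hW ω hN
  refine ⟨N + w.length, by omega, y, hy, ?_⟩
  have hNc : (0 : ℝ) < N * c := by positivity
  have hIy : (N : ℝ) * c ≤ birkSum I (N + w.length) y :=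
    (mul_le_mul_of_nonneg_right (by exact_mod_cast N.le_add_right _) hc.le).trans
      (mul_le_birkSum hI _ y)
  have hIdiff := hKI w hw ω y N hyω hyw
  rw [Real.norm_eq_abs] at hIdiff
  calc _ = ‖(birkSum I (N + w.length) y)⁻¹ • birkSum J (N + w.length) y
          - (birkSum I N ω)⁻¹ • birkSum J N ω‖ := dist_eq_norm _ _
    _ ≤ _ := norm_inv_smul_sub_inv_smul_le _ _ hNc (mul_le_birkSum hI N ω) hIy
    _ ≤ KJ / (N * c) + KI * (N * C) / (N * c) ^ 2 := by
        gcongr ?_ / _ + ?_ / _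
        · exact hKJ w hw ω y N hyω hyw
        · exact mul_le_mul hIdiff (norm_birkSum_le hC N ω) (norm_nonneg _)
            ((abs_nonneg _).trans hIdiff)
    _ = (KJ / c + KI * C / c ^ 2) / N := by field_simp

lemma mem_closure_of_tendsto_of_eventually_dist_le {Y : Type*} [PseudoMetricSpace Y]
    {s : Set Y} {u : ℕ → Y} {α : Y} {ε : ℕ → ℝ} (hu : Tendsto u atTop (𝓝 α))
    (hε : Tendsto ε atTop (𝓝 0)) (h : ∀ᶠ n in atTop, ∃ x ∈ s, dist x (u n) ≤ ε n) :
    α ∈ closure s := by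
  refine Metric.mem_closure_iff.mpr fun δ hδ => ?_
  obtain ⟨n, hun, hεn, x, hx, hxu⟩ := ((hu.eventually (Metric.ball_mem_nhds α (half_pos hδ))).and
    ((hε.eventually (gt_mem_nhds (half_pos hδ))).and h)).exists
  refine ⟨x, hx, ?_⟩
  calc dist α x ≤ dist α (u n) + dist (u n) x := dist_triangle _ _ _
    _ < δ := by linarith [dist_comm α (u n), dist_comm (u n) x]

end

theorem K_subset_closure_periodic_general {E : Type*} (A : E → E → Bool) (d : ℕ)
    (hfi : FinitelyIrreducible A)
    (s : ℝ) (hs : s ∈ Set.Ioo (0 : ℝ) 1)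
    (I : Subshift E A → ℝ) (aI : ℝ) (haI : 0 < aI) (hIhold : IsHolder I aI)
    (hIlb : ∀ ω, -Real.log s ≤ I ω)
    (J : Subshift E A → EuclideanSpace ℝ (Fin d)) (aJ : ℝ) (haJ : 0 < aJ)
    (hJhold : IsHolder J aJ) (hJbdd : ∃ C : ℝ, ∀ ω, ‖J ω‖ ≤ C) :
    {α : EuclideanSpace ℝ (Fin d) | ∃ ω : Subshift E A,
        Tendsto (fun n => (birkSum I n ω)⁻¹ • birkSum J n ω) atTop (𝓝 α)} ⊆
      closure {x : EuclideanSpace ℝ (Fin d) | ∃ p : ℕ, 1 ≤ p ∧ ∃ y : Subshift E A,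
        shiftMap^[p] y = y ∧ x = (birkSum I p y)⁻¹ • birkSum J p y} := by
  rintro α ⟨ω, hω⟩
  have hc : 0 < -Real.log s := neg_pos.mpr (Real.log_neg hs.1 hs.2)
  obtain ⟨D, hD⟩ :=
    exists_periodic_birkSum_ratio_near hfi hc hIlb haI hIhold haJ hJhold hJbdd
  refine mem_closure_of_tendsto_of_eventually_dist_le hω
    (tendsto_const_div_atTop_nhds_zero_nat D) ?_
  filter_upwards [eventually_gt_atTop 0] with N hN
  obtain ⟨p, hp, y, hy, hdist⟩ := hD ω N hN
  exact ⟨_, ⟨p, hp, y, hy, rfl⟩, hdist⟩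

/-- every `α ∈ K` is a limit of Birkhoff-ratio values at periodic points. -/
theorem K_subset_closure_periodic {E : Type*} [Countable E] (A : E → E → Bool) (d : ℕ)
    (hne : Nonempty (Subshift E A)) (hfi : FinitelyIrreducible A)
    (s : ℝ) (hs : s ∈ Set.Ioo (0 : ℝ) 1)
    (I : Subshift E A → ℝ) (aI : ℝ) (haI : 0 < aI) (hIhold : IsHolder I aI)
    (hIlb : ∀ ω, -Real.log s ≤ I ω)
    (J : Subshift E A → EuclideanSpace ℝ (Fin d)) (aJ : ℝ) (haJ : 0 < aJ)
    (hJhold : IsHolder J aJ) (hJbdd : ∃ C : ℝ, ∀ ω, ‖J ω‖ ≤ C) :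
    {α : EuclideanSpace ℝ (Fin d) | ∃ ω : Subshift E A,
        Tendsto (fun n => (birkSum I n ω)⁻¹ • birkSum J n ω) atTop (𝓝 α)} ⊆
      closure {x : EuclideanSpace ℝ (Fin d) | ∃ p : ℕ, 1 ≤ p ∧ ∃ y : Subshift E A,
        shiftMap^[p] y = y ∧ x = (birkSum I p y)⁻¹ • birkSum J p y} :=
  K_subset_closure_periodic_general A d hfi s hs I aI haI hIhold hIlb J aJ haJ hJhold hJbdd
end

section
/- Let I : E_A^∞ → [0,∞) be a Borel measurable function such that inf{ I(ω) : ω ∈ E_A^∞, ω_1 ≥ ℓ } → ∞ as ℓ → ∞. Then any family M of σ-invariant Borel probability measures on E_A^∞ with sup_{μ∈M} ∫ I dμ < ∞ is tight: for every ε > 0 there is a compact set C ⊆ E_A^∞ with μ(E_A^∞ \ C) ≤ ε for all μ ∈ M. -/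
open MeasureTheory Filter Topology
open scoped ENNReal

/-!
Shift invariance gives the `i`-th coordinate under `μ` the same law as the first one, and Markov's
inequality for `I` bounds `μ {ω₁ ≥ ℓ}` by `B / inf {I ω : ω₁ ≥ ℓ}` uniformly over the family.
Choosing thresholds `ℓᵢ` with `∑ᵢ μ {ωᵢ ≥ ℓᵢ} ≤ ε`, the set `{ω : ωᵢ < ℓᵢ for all i}` is compact
(a closed subset of the product of the finite sets `[0, ℓᵢ)`) and its complement has mass `≤ ε`.
-/

open Set

lemma MeasureTheory.mul_measure_le_lintegral_of_forall_le {α : Type*} [MeasurableSpace α]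
    {μ : Measure α} {f : α → ℝ≥0∞} {s : Set α} {c : ℝ≥0∞} (hs : MeasurableSet s)
    (hf : ∀ x ∈ s, c ≤ f x) : c * μ s ≤ ∫⁻ x, f x ∂μ :=
  calc c * μ s = ∫⁻ _ in s, c ∂μ := (setLIntegral_const s c).symm
    _ ≤ ∫⁻ x in s, f x ∂μ := setLIntegral_mono' hs hf
    _ ≤ ∫⁻ x, f x ∂μ := setLIntegral_le_lintegral s f

namespace Subshift

variable {E : Type*} {A : E → E → Bool}

lemma shiftMap_iterate_coe_apply (ω : Subshift E A) (k j : ℕ) :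
    (shiftMap^[k] ω).1 j = ω.1 (j + k) := by
  induction k generalizing j with
  | zero => rfl
  | succ k ih =>
    rw [Function.iterate_succ_apply']
    exact (ih (j + 1)).trans (congrArg ω.1 (Nat.add_right_comm j 1 k))

section Topology

variable [TopologicalSpace E] [DiscreteTopology E]

lemma isClosed_setOf_admissible (A : E → E → Bool) :
    IsClosed {ω : ℕ → E | ∀ i, A (ω i) (ω (i + 1)) = true} := by
  simp only [ofPred_forall]
  exact isClosed_iInter fun i =>
    (isClosed_discrete {p : E × E | A p.1 p.2 = true}).preimage
      (f := fun ω : ℕ → E => (ω i, ω (i + 1))) (by fun_prop)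

lemma isCompact_setOf_forall_coe_mem {F : ℕ → Set E} (hF : ∀ i, (F i).Finite) :
    IsCompact {ω : Subshift E A | ∀ i, ω.1 i ∈ F i} := by
  have hpi : IsCompact (univ.pi F) := isCompact_univ_pi fun i => (hF i).isCompact
  simpa [Set.preimage, Set.mem_univ_pi] using
    (isClosed_setOf_admissible A).isClosedEmbedding_subtypeVal.isCompact_preimage hpi

end Topology

section Measure

variable [MeasurableSpace E]

lemma measurableSet_setOf_coe_mem {s : Set E} (hs : MeasurableSet s) (i : ℕ) :
    MeasurableSet {ω : Subshift E A | ω.1 i ∈ s} :=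
  ((measurable_pi_apply i).comp measurable_subtype_coe) hs

lemma measure_setOf_coe_mem_eq {μ : Measure (Subshift E A)}
    (hμ : MeasurePreserving shiftMap μ μ) {s : Set E} (hs : MeasurableSet s) (i : ℕ) :
    μ {ω : Subshift E A | ω.1 i ∈ s} = μ {ω : Subshift E A | ω.1 0 ∈ s} := by
  have hpre : {ω : Subshift E A | ω.1 i ∈ s} = shiftMap^[i] ⁻¹' {ω | ω.1 0 ∈ s} := by
    ext ω
    simp [shiftMap_iterate_coe_apply]
  rw [hpre, (hμ.iterate i).measure_preimage (measurableSet_setOf_coe_mem hs 0).nullMeasurableSet]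

end Measure

variable {A : ℕ → ℕ → Bool} {M : Set (Measure (Subshift ℕ A))}

lemma isTightMeasureSet_of_forall_exists_measure_le
    (h : ∀ i, ∀ δ : ℝ≥0∞, 0 < δ → ∃ ℓ : ℕ, ∀ μ ∈ M, μ {ω : Subshift ℕ A | ℓ ≤ ω.1 i} ≤ δ) :
    IsTightMeasureSet M := by
  rw [isTightMeasureSet_iff_exists_isCompact_measure_compl_le]
  intro ε hε
  obtain ⟨δ, hδ, hδε⟩ := ENNReal.exists_pos_sum_of_countable' hε.ne' ℕ
  choose ℓ hℓ using fun i => h i (δ i) (hδ i)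
  refine ⟨{ω | ∀ i, ω.1 i ∈ Iio (ℓ i)},
    isCompact_setOf_forall_coe_mem fun i => finite_Iio _, fun μ hμ => ?_⟩
  have hcompl : {ω : Subshift ℕ A | ∀ i, ω.1 i ∈ Iio (ℓ i)}ᶜ = ⋃ i, {ω | ℓ i ≤ ω.1 i} := by
    ext
    simp
  calc μ {ω : Subshift ℕ A | ∀ i, ω.1 i ∈ Iio (ℓ i)}ᶜ
      ≤ ∑' i, μ {ω : Subshift ℕ A | ℓ i ≤ ω.1 i} := hcompl ▸ measure_iUnion_le _
    _ ≤ ∑' i, δ i := ENNReal.tsum_le_tsum fun i => hℓ i μ hμ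
    _ ≤ ε := hδε.le

lemma exists_forall_measure_le_of_lintegral_le {I : Subshift ℕ A → ℝ}
    (hblow : ∀ C : ℝ, ∃ ℓ : ℕ, ∀ ω : Subshift ℕ A, ℓ ≤ ω.1 0 → C ≤ I ω) {B : ℝ≥0∞}
    (hB : B ≠ ⊤) (hM : ∀ μ ∈ M, ∫⁻ ω, ENNReal.ofReal (I ω) ∂μ ≤ B) {δ : ℝ≥0∞} (hδ : 0 < δ) :
    ∃ ℓ : ℕ, ∀ μ ∈ M, μ {ω : Subshift ℕ A | ℓ ≤ ω.1 0} ≤ δ := by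
  obtain ⟨n, hn⟩ := ENNReal.exists_nat_gt (ENNReal.div_ne_top hB hδ.ne')
  obtain ⟨ℓ, hℓ⟩ := hblow n
  refine ⟨ℓ, fun μ hμ => ?_⟩
  have hmarkov : (n : ℝ≥0∞) * μ {ω : Subshift ℕ A | ℓ ≤ ω.1 0} ≤ B := by
    refine (mul_measure_le_lintegral_of_forall_le
      (measurableSet_setOf_coe_mem measurableSet_Ici 0) fun ω hω => ?_).trans (hM μ hμ)
    simpa using ENNReal.ofReal_le_ofReal (hℓ ω hω)
  have hn0 : (n : ℝ≥0∞) ≠ 0 := (hn.trans_le' zero_le).ne'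
  rw [ENNReal.div_lt_iff (Or.inl hδ.ne') (Or.inr hB)] at hn
  exact (ENNReal.mul_lt_mul_iff_right hn0 (ENNReal.natCast_ne_top n)).1 (hmarkov.trans_lt hn) |>.le

end Subshift

theorem tight_of_bounded_I_integrals_general (A : ℕ → ℕ → Bool)
    (I : Subshift ℕ A → ℝ)
    (hblow : ∀ C : ℝ, ∃ ℓ : ℕ, ∀ ω : Subshift ℕ A, ℓ ≤ ω.1 0 → C ≤ I ω)
    (M : Set (Measure (Subshift ℕ A)))
    (hinv : ∀ μ ∈ M, MeasurePreserving shiftMap μ μ)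
    (hbdd : ∃ B : ℝ≥0∞, B ≠ ⊤ ∧ ∀ μ ∈ M, ∫⁻ ω, ENNReal.ofReal (I ω) ∂μ ≤ B) :
    ∀ ε : ℝ≥0∞, 0 < ε → ∃ C : Set (Subshift ℕ A), IsCompact C ∧ ∀ μ ∈ M, μ Cᶜ ≤ ε := by
  obtain ⟨B, hB, hM⟩ := hbdd
  refine isTightMeasureSet_iff_exists_isCompact_measure_compl_le.1 <|
    Subshift.isTightMeasureSet_of_forall_exists_measure_le fun i δ hδ => ?_
  obtain ⟨ℓ, hℓ⟩ := Subshift.exists_forall_measure_le_of_lintegral_le hblow hB hM hδ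
  exact ⟨ℓ, fun μ hμ =>
    (Subshift.measure_setOf_coe_mem_eq (hinv μ hμ) measurableSet_Ici i).trans_le (hℓ μ hμ)⟩

/-- if `I ≥ 0` and `inf { I ω : ω₁ ≥ ℓ } → ∞` as `ℓ → ∞`, then any family of
shift-invariant Borel probability measures with uniformly bounded `∫ I dμ` is tight. -/
theorem tight_of_bounded_I_integrals (A : ℕ → ℕ → Bool)
    (I : Subshift ℕ A → ℝ) (hI0 : ∀ ω, 0 ≤ I ω) (hImeas : Measurable I)
    (hblow : ∀ C : ℝ, ∃ ℓ : ℕ, ∀ ω : Subshift ℕ A, ℓ ≤ ω.1 0 → C ≤ I ω)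
    (M : Set (Measure (Subshift ℕ A)))
    (hprob : ∀ μ ∈ M, IsProbabilityMeasure μ)
    (hinv : ∀ μ ∈ M, MeasurePreserving shiftMap μ μ)
    (hbdd : ∃ B : ℝ≥0∞, B ≠ ⊤ ∧ ∀ μ ∈ M, ∫⁻ ω, ENNReal.ofReal (I ω) ∂μ ≤ B) :
    ∀ ε : ℝ≥0∞, 0 < ε → ∃ C : Set (Subshift ℕ A), IsCompact C ∧ ∀ μ ∈ M, μ Cᶜ ≤ ε :=
  tight_of_bounded_I_integrals_general A I hblow M hinv hbdd
end

section
/- Let I : ℕ^ℕ → ℝ be the function I(ω) := 2 log(ω_1 + 2), depending only on the first coordinate. Then there exist σ-invariant Borel probability measures μ, μ_1, μ_2, … on the full shift ℕ^ℕ such that μ_n converges weakly to μ, ∫ I dμ < ∞ and ∫ I dμ_n < ∞ for all n, and nevertheless liminf_{n→∞} ∫ I dμ_n > ∫ I dμ. In particular, the map ν ↦ ∫ I dν on σ-invariant probability measures is not continuous with respect to weak convergence. -/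
open MeasureTheory Filter Topology
open scoped ENNReal BoundedContinuousFunction

/-- The left shift on the full shift space `ℕ^ℕ`. -/
def fullShift (ω : ℕ → ℕ) : ℕ → ℕ := fun i => ω (i + 1)

/-! Fixed points of the shift carry invariant Dirac measures. Take `μ = δ_{0^∞}` and
`μₙ = (1 - 1/(n+1)) μ + 1/(n+1) δ_{kₙ^∞}` with `log (kₙ + 2) ≥ n + 1`. A vanishing proportion
of mixed-in mass does not change weak limits, so `μₙ → μ`; but that mass sits where
`I ≥ 2 (n + 1)`, so it contributes at least `2` to `∫ I dμₙ`, while `∫ I dμ = 2 log 2 < 2`. -/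

namespace MeasureTheory.Measure

variable {α β E : Type*} [MeasurableSpace α] [MeasurableSpace β]

noncomputable def mixture (t : ℝ≥0∞) (μ ν : Measure α) : Measure α := (1 - t) • μ + t • ν

theorem isProbabilityMeasure_mixture {t : ℝ≥0∞} (ht : t ≤ 1) (μ ν : Measure α)
    [IsProbabilityMeasure μ] [IsProbabilityMeasure ν] : IsProbabilityMeasure (mixture t μ ν) :=
  ⟨by simp [mixture, tsub_add_cancel_of_le ht]⟩

theorem lintegral_mixture (t : ℝ≥0∞) (μ ν : Measure α) (f : α → ℝ≥0∞) :
    ∫⁻ x, f x ∂(mixture t μ ν) = (1 - t) * ∫⁻ x, f x ∂μ + t * ∫⁻ x, f x ∂ν := by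
  rw [mixture, lintegral_add_measure, lintegral_smul_measure, lintegral_smul_measure, smul_eq_mul,
    smul_eq_mul]

theorem mul_lintegral_le_lintegral_mixture (t : ℝ≥0∞) (μ ν : Measure α) (f : α → ℝ≥0∞) :
    t * ∫⁻ x, f x ∂ν ≤ ∫⁻ x, f x ∂(mixture t μ ν) :=
  (lintegral_mixture t μ ν f).symm ▸ le_add_self

theorem lintegral_mixture_lt_top {t : ℝ≥0∞} (ht : t ≠ ∞) {μ ν : Measure α} {f : α → ℝ≥0∞}
    (hμ : ∫⁻ x, f x ∂μ < ∞) (hν : ∫⁻ x, f x ∂ν < ∞) : ∫⁻ x, f x ∂(mixture t μ ν) < ∞ := by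
  rw [lintegral_mixture]
  exact ENNReal.add_lt_top.2 ⟨ENNReal.mul_lt_top (ENNReal.sub_ne_top ENNReal.one_ne_top).lt_top hμ,
    ENNReal.mul_lt_top ht.lt_top hν⟩

theorem integral_mixture [NormedAddCommGroup E] [NormedSpace ℝ E] {t : ℝ≥0∞} (ht : t ≠ ∞)
    {μ ν : Measure α} {f : α → E} (hμ : Integrable f μ) (hν : Integrable f ν) :
    ∫ x, f x ∂(mixture t μ ν) = (1 - t).toReal • ∫ x, f x ∂μ + t.toReal • ∫ x, f x ∂ν := by
  rw [mixture, integral_add_measure (hμ.smul_measure (ENNReal.sub_ne_top ENNReal.one_ne_top))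
    (hν.smul_measure ht), integral_smul_measure, integral_smul_measure]

theorem _root_.MeasureTheory.measurePreserving_dirac {f : α → β} (hf : Measurable f) (x : α) :
    MeasurePreserving f (dirac x) (dirac (f x)) :=
  ⟨hf, map_dirac' hf x⟩

theorem _root_.MeasureTheory.MeasurePreserving.mixture {T : α → β} {μ ν : Measure α}
    {μ' ν' : Measure β} (hμ : MeasurePreserving T μ μ') (hν : MeasurePreserving T ν ν')
    (t : ℝ≥0∞) : MeasurePreserving T (mixture t μ ν) (mixture t μ' ν') :=
  ⟨hμ.measurable, by
    rw [Measure.mixture, Measure.map_add _ _ hμ.measurable, Measure.map_smul, Measure.map_smul,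
      hμ.map_eq, hν.map_eq, Measure.mixture]⟩

theorem tendsto_integral_mixture [TopologicalSpace α] [OpensMeasurableSpace α]
    {a : ℕ → ℝ≥0∞} (ha : Tendsto a atTop (𝓝 0))
    (μ : Measure α) [IsProbabilityMeasure μ] (ν : ℕ → Measure α) [∀ n, IsProbabilityMeasure (ν n)]
    (f : α →ᵇ ℝ) :
    Tendsto (fun n => ∫ x, f x ∂(mixture (a n) μ (ν n))) atTop (𝓝 (∫ x, f x ∂μ)) := by
  have h_eq : ∀ᶠ n in atTop, (1 - a n).toReal • ∫ x, f x ∂μ + (a n).toReal • ∫ x, f x ∂(ν n)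
      = ∫ x, f x ∂(mixture (a n) μ (ν n)) :=
    (ha.eventually_ne ENNReal.zero_ne_top).mono fun n hn =>
      (integral_mixture hn (f.integrable μ) (f.integrable (ν n))).symm
  refine Tendsto.congr' h_eq ?_
  have h_main : Tendsto (fun n => (1 - a n).toReal) atTop (𝓝 1) := by
    have h := ((ENNReal.continuous_sub_left ENNReal.one_ne_top).tendsto 0).comp ha
    rw [tsub_zero] at h
    exact (ENNReal.tendsto_toReal ENNReal.one_ne_top).comp h
  have h_rest : Tendsto (fun n => (a n).toReal • ∫ x, f x ∂(ν n)) atTop (𝓝 0) :=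
    (ENNReal.tendsto_toReal ENNReal.zero_ne_top |>.comp ha).zero_smul_isBoundedUnder_le
      ⟨‖f‖, eventually_map.2 (Eventually.of_forall fun n => f.norm_integral_le_norm (ν n))⟩
  simpa using (h_main.smul_const _).add h_rest

end MeasureTheory.Measure

theorem measurable_fullShift : Measurable fullShift :=
  measurable_pi_lambda _ fun i => measurable_pi_apply (i + 1)

theorem measurePreserving_fullShift_dirac_const (k : ℕ) :
    MeasurePreserving fullShift (Measure.dirac fun _ => k) (Measure.dirac fun _ => k) :=
  measurePreserving_dirac measurable_fullShift _

theorem exists_nat_le_log_add_two (x : ℝ) : ∃ k : ℕ, x ≤ Real.log (k + 2) :=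
  ⟨⌈Real.exp x⌉₊, (Real.le_log_iff_exp_le (by positivity)).2 <| by
    linarith [Nat.le_ceil (Real.exp x)]⟩

theorem two_le_inv_mul_ofReal {n : ℕ} {x : ℝ} (hx : (n : ℝ) + 1 ≤ x) :
    2 ≤ ((n + 1 : ℕ) : ℝ≥0∞)⁻¹ * ENNReal.ofReal (2 * x) := by
  calc (2 : ℝ≥0∞) = ((n + 1 : ℕ) : ℝ≥0∞)⁻¹ * (2 * (n + 1 : ℕ)) := by
        rw [mul_left_comm, ENNReal.inv_mul_cancel (by simp) (by simp), mul_one]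
    _ ≤ ((n + 1 : ℕ) : ℝ≥0∞)⁻¹ * ENNReal.ofReal (2 * x) := by
        gcongr
        rw [ENNReal.ofReal_mul zero_le_two, ENNReal.ofReal_ofNat]
        gcongr
        exact (ENNReal.natCast_le_ofReal (by simp)).2 (by push_cast; exact hx)

/-- for `I(ω) = 2 log(ω₁ + 2)` there are shift-invariant Borel probability
measures `μ_n → μ` weakly, all with `∫ I dμ_n, ∫ I dμ < ∞`, but
`liminf_n ∫ I dμ_n > ∫ I dμ`; in particular `ν ↦ ∫ I dν` is not weakly continuous. -/
theorem I_integral_not_weakly_continuous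
    (I : (ℕ → ℕ) → ℝ) (hI : ∀ ω, I ω = 2 * Real.log ((ω 0 : ℝ) + 2)) :
    ∃ (μ : Measure (ℕ → ℕ)) (μs : ℕ → Measure (ℕ → ℕ)),
      IsProbabilityMeasure μ ∧ (∀ n, IsProbabilityMeasure (μs n)) ∧
      MeasurePreserving fullShift μ μ ∧
      (∀ n, MeasurePreserving fullShift (μs n) (μs n)) ∧
      (∀ f : (ℕ → ℕ) →ᵇ ℝ,
        Tendsto (fun n => ∫ ω, f ω ∂(μs n)) atTop (𝓝 (∫ ω, f ω ∂μ))) ∧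
      (∫⁻ ω, ENNReal.ofReal (I ω) ∂μ < ⊤) ∧
      (∀ n, ∫⁻ ω, ENNReal.ofReal (I ω) ∂(μs n) < ⊤) ∧
      ∫⁻ ω, ENNReal.ofReal (I ω) ∂μ <
        liminf (fun n => ∫⁻ ω, ENNReal.ofReal (I ω) ∂(μs n)) atTop := by
  choose k hk using fun n : ℕ => exists_nat_le_log_add_two (n + 1)
  set a : ℕ → ℝ≥0∞ := fun n => ((n + 1 : ℕ) : ℝ≥0∞)⁻¹
  set δ : ℕ → Measure (ℕ → ℕ) := fun m => Measure.dirac fun _ => m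
  have ha : Tendsto a atTop (𝓝 0) :=
    ENNReal.tendsto_inv_nat_nhds_zero.comp (tendsto_add_atTop_nat 1)
  have ha_le_one (n : ℕ) : a n ≤ 1 := ENNReal.inv_le_one.2 (by simp)
  have hδ (m : ℕ) : ∫⁻ ω, ENNReal.ofReal (I ω) ∂δ m = ENNReal.ofReal (2 * Real.log (m + 2)) := by
    simp only [δ, lintegral_dirac, hI]
  have hδ_lt_two : ∫⁻ ω, ENNReal.ofReal (I ω) ∂δ 0 < 2 := by
    rw [hδ, ← ENNReal.ofReal_ofNat 2, ENNReal.ofReal_lt_ofReal_iff two_pos]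
    have h_log_two : Real.log 2 < 2 - 1 := Real.log_lt_sub_one_of_pos two_pos (by norm_num)
    norm_num
    linarith
  have h_two_le (n : ℕ) : 2 ≤ ∫⁻ ω, ENNReal.ofReal (I ω) ∂(Measure.mixture (a n) (δ 0) (δ (k n))) :=
    calc 2 ≤ a n * ∫⁻ ω, ENNReal.ofReal (I ω) ∂δ (k n) := hδ (k n) ▸ two_le_inv_mul_ofReal (hk n)
      _ ≤ _ := Measure.mul_lintegral_le_lintegral_mixture _ _ _ _
  refine ⟨δ 0, fun n => Measure.mixture (a n) (δ 0) (δ (k n)), inferInstance,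
    fun n => Measure.isProbabilityMeasure_mixture (ha_le_one n) _ _,
    measurePreserving_fullShift_dirac_const 0,
    fun n => (measurePreserving_fullShift_dirac_const 0).mixture
      (measurePreserving_fullShift_dirac_const (k n)) (a n),
    Measure.tendsto_integral_mixture ha _ _, hδ 0 ▸ ENNReal.ofReal_lt_top,
    fun n => Measure.lintegral_mixture_lt_top ((ha_le_one n).trans_lt ENNReal.one_lt_top).ne
      (hδ 0 ▸ ENNReal.ofReal_lt_top) (hδ (k n) ▸ ENNReal.ofReal_lt_top),
    hδ_lt_two.trans_le (le_liminf_of_le (by isBoundedDefault) (Eventually.of_forall h_two_le))⟩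
end
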